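/- arXiv:2604.04249 — 2 statements merged into one kernel-verified Lean document; each statement's English description precedes it below -/
import Mathlib

section
/- For a non-degenerate sample x₁,...,xₙ of positive reals, the empirical Atkinson index ordering holds: for ε < 2, Â(ε) < Ĵ, and for ε > 2, Â(ε) > Ĵ, where Ĵ = 1 - n²/(Σᵢ xᵢ · Σⱼ 1/xⱼ) and Â(ε) = 1 - ((1/n)Σᵢ xᵢ^{1-ε})^{1/(1-ε)} / x̄. -/
/-!
With `M p` the power mean of the sample, `Â(ε) = 1 - M (1 - ε) / M 1` and `Ĵ = 1 - M (-1) / M 1`,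
so both inequalities are the strict monotonicity of `p ↦ M p`. Substituting `y = z ^ p` turns
the comparison of `M p` and `M q` into one of `M (q / p)` with the arithmetic mean `M 1` of `y`,
which is strict Jensen for `u ↦ u ^ (q / p)`.
-/

open Finset Set

theorem Real.strictConvexOn_rpow_of_neg {p : ℝ} (hp : p < 0) :
    StrictConvexOn ℝ (Ioi 0) fun x : ℝ ↦ x ^ p := by
  refine StrictMonoOn.strictConvexOn_of_deriv (convex_Ioi 0)
    (fun x hx ↦ (Real.continuousAt_rpow_const _ _ (.inl (ne_of_gt hx))).continuousWithinAt) ?_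
  rw [interior_Ioi, Real.deriv_rpow_const']
  intro a ha b _ hab
  exact mul_lt_mul_of_neg_left (Real.rpow_lt_rpow_of_neg ha hab (by linarith)) hp

noncomputable def weightedPowerMean {ι : Type*} (s : Finset ι) (w z : ι → ℝ) (p : ℝ) : ℝ :=
  (∑ i ∈ s, w i * z i ^ p) ^ (1 / p)

section WeightedPowerMean

variable {ι : Type*} {s : Finset ι} {w z : ι → ℝ}

theorem weightedPowerMean_one (s : Finset ι) (w z : ι → ℝ) :
    weightedPowerMean s w z 1 = ∑ i ∈ s, w i * z i := by
  simp [weightedPowerMean]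

theorem weightedPowerMean_neg_one (s : Finset ι) (w z : ι → ℝ) :
    weightedPowerMean s w z (-1) = (∑ i ∈ s, w i * (z i)⁻¹)⁻¹ := by
  simp [weightedPowerMean, Real.rpow_neg_one]

theorem weightedPowerMean_pos (hw : ∀ i ∈ s, 0 < w i) (hz : ∀ i ∈ s, 0 < z i)
    (hs : s.Nonempty) (p : ℝ) : 0 < weightedPowerMean s w z p :=
  Real.rpow_pos_of_pos
    (sum_pos (fun i hi ↦ mul_pos (hw i hi) (Real.rpow_pos_of_pos (hz i hi) p)) hs) _

theorem weightedPowerMean_eq_rpow_weightedPowerMean_rpow (hw : ∀ i ∈ s, 0 ≤ w i)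
    (hz : ∀ i ∈ s, 0 ≤ z i) {p : ℝ} (hp : p ≠ 0) (q : ℝ) :
    weightedPowerMean s w z q = weightedPowerMean s w (fun i ↦ z i ^ p) (q / p) ^ (1 / p) := by
  have hsum : ∑ i ∈ s, w i * (z i ^ p) ^ (q / p) = ∑ i ∈ s, w i * z i ^ q :=
    sum_congr rfl fun i hi ↦ by rw [← Real.rpow_mul (hz i hi), mul_div_cancel₀ q hp]
  have hnonneg : 0 ≤ ∑ i ∈ s, w i * z i ^ q :=
    sum_nonneg fun i hi ↦ mul_nonneg (hw i hi) (Real.rpow_nonneg (hz i hi) q)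
  rw [weightedPowerMean, weightedPowerMean, hsum, ← Real.rpow_mul hnonneg]
  congr 1
  field_simp

theorem weightedPowerMean_lt_weightedPowerMean_one (hw : ∀ i ∈ s, 0 < w i)
    (hw₁ : ∑ i ∈ s, w i = 1) (hz : ∀ i ∈ s, 0 < z i) (hz₂ : ∃ i ∈ s, ∃ j ∈ s, z i ≠ z j)
    {p : ℝ} (hp₀ : p ≠ 0) (hp₁ : p < 1) :
    weightedPowerMean s w z p < weightedPowerMean s w z 1 := by
  have hA := weightedPowerMean_pos hw hz (hz₂.imp fun _ h ↦ h.1) 1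
  rw [weightedPowerMean_one] at hA ⊢
  rcases hp₀.lt_or_gt with hneg | hpos
  · have hjensen := (Real.strictConvexOn_rpow_of_neg hneg).map_sum_lt hw hw₁
      (fun i hi ↦ mem_Ioi.2 (hz i hi)) hz₂
    simp only [smul_eq_mul] at hjensen
    have := Real.rpow_lt_rpow_of_neg (Real.rpow_pos_of_pos hA p) hjensen (one_div_neg.2 hneg)
    rwa [← Real.rpow_mul hA.le, mul_one_div_cancel hp₀, Real.rpow_one] at this
  · have hjensen := (Real.strictConcaveOn_rpow hpos hp₁).lt_map_sum hw hw₁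
      (fun i hi ↦ mem_Ici.2 (hz i hi).le) hz₂
    simp only [smul_eq_mul] at hjensen
    have := Real.rpow_lt_rpow (sum_nonneg fun i hi ↦ mul_nonneg (hw i hi).le
      (Real.rpow_nonneg (hz i hi).le p)) hjensen (one_div_pos.2 hpos)
    rwa [← Real.rpow_mul hA.le, mul_one_div_cancel hp₀, Real.rpow_one] at this

theorem weightedPowerMean_one_lt_weightedPowerMean (hw : ∀ i ∈ s, 0 < w i)
    (hw₁ : ∑ i ∈ s, w i = 1) (hz : ∀ i ∈ s, 0 < z i) (hz₂ : ∃ i ∈ s, ∃ j ∈ s, z i ≠ z j)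
    {p : ℝ} (hp : 1 < p) :
    weightedPowerMean s w z 1 < weightedPowerMean s w z p := by
  have hA := weightedPowerMean_pos hw hz (hz₂.imp fun _ h ↦ h.1) 1
  rw [weightedPowerMean_one] at hA ⊢
  have hjensen := (strictConvexOn_rpow hp).map_sum_lt hw hw₁
    (fun i hi ↦ mem_Ici.2 (hz i hi).le) hz₂
  simp only [smul_eq_mul] at hjensen
  have := Real.rpow_lt_rpow (Real.rpow_nonneg hA.le p) hjensen (by positivity : 0 < 1 / p)
  rwa [← Real.rpow_mul hA.le, mul_one_div_cancel (by positivity), Real.rpow_one] at this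

theorem weightedPowerMean_lt_weightedPowerMean (hw : ∀ i ∈ s, 0 < w i)
    (hw₁ : ∑ i ∈ s, w i = 1) (hz : ∀ i ∈ s, 0 < z i) (hz₂ : ∃ i ∈ s, ∃ j ∈ s, z i ≠ z j)
    {p q : ℝ} (hp : p ≠ 0) (hq : q ≠ 0) (hpq : p < q) :
    weightedPowerMean s w z p < weightedPowerMean s w z q := by
  have hzp : ∀ i ∈ s, 0 < z i ^ p := fun i hi ↦ Real.rpow_pos_of_pos (hz i hi) p
  obtain ⟨i, hi, j, hj, hij⟩ := hz₂
  have hzp₂ : ∃ i ∈ s, ∃ j ∈ s, z i ^ p ≠ z j ^ p :=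
    ⟨i, hi, j, hj, by rwa [Ne, Real.rpow_left_inj (hz i hi).le (hz j hj).le hp]⟩
  have hM := weightedPowerMean_pos hw hzp ⟨i, hi⟩ (q / p)
  have hw₀ : ∀ i ∈ s, 0 ≤ w i := fun i hi ↦ (hw i hi).le
  have hz₀ : ∀ i ∈ s, 0 ≤ z i := fun i hi ↦ (hz i hi).le
  rw [weightedPowerMean_eq_rpow_weightedPowerMean_rpow hw₀ hz₀ hp p,
    weightedPowerMean_eq_rpow_weightedPowerMean_rpow hw₀ hz₀ hp q, div_self hp]
  rcases hp.lt_or_gt with hneg | hpos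
  · have hqp : q / p < 1 := by rwa [div_lt_one_of_neg hneg]
    exact Real.rpow_lt_rpow_of_neg hM
      (weightedPowerMean_lt_weightedPowerMean_one hw hw₁ hzp hzp₂ (div_ne_zero hq hp) hqp)
      (one_div_neg.2 hneg)
  · have hqp : 1 < q / p := by rwa [one_lt_div hpos]
    exact Real.rpow_lt_rpow (weightedPowerMean_pos hw hzp ⟨i, hi⟩ 1).le
      (weightedPowerMean_one_lt_weightedPowerMean hw hw₁ hzp hzp₂ hqp) (one_div_pos.2 hpos)

end WeightedPowerMean

theorem empirical_atkinson_vs_ahi_general (n : ℕ) (x : Fin n → ℝ)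
    (hpos : ∀ i, 0 < x i) (hnondeg : ∃ i j, x i ≠ x j) (ε : ℝ) (hε : ε ≠ 1) :
    (ε < 2 →
      1 - ((1 / (n : ℝ)) * ∑ i, x i ^ (1 - ε)) ^ (1 / (1 - ε)) / ((1 / (n : ℝ)) * ∑ i, x i)
        < 1 - (((1 / (n : ℝ)) * ∑ i, x i) * ((1 / (n : ℝ)) * ∑ i, (x i)⁻¹))⁻¹) ∧
    (2 < ε →
      1 - (((1 / (n : ℝ)) * ∑ i, x i) * ((1 / (n : ℝ)) * ∑ i, (x i)⁻¹))⁻¹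
        < 1 - ((1 / (n : ℝ)) * ∑ i, x i ^ (1 - ε)) ^ (1 / (1 - ε)) / ((1 / (n : ℝ)) * ∑ i, x i)) := by
  obtain ⟨i, j, hij⟩ := hnondeg
  set w : Fin n → ℝ := fun _ ↦ 1 / n
  set M := weightedPowerMean univ w x
  have hn : (n : ℝ) ≠ 0 := Nat.cast_ne_zero.2 (Fin.pos i).ne'
  have hw₁ : ∑ k, w k = 1 := by simp [w, hn]
  have hmono {p q : ℝ} (hp : p ≠ 0) (hq : q ≠ 0) (hpq : p < q) : M p < M q :=
    weightedPowerMean_lt_weightedPowerMean (fun _ _ ↦ by positivity) hw₁ (fun k _ ↦ hpos k)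
      ⟨i, mem_univ i, j, mem_univ j, hij⟩ hp hq hpq
  have hM₁ : 0 < M 1 :=
    weightedPowerMean_pos (fun _ _ ↦ by positivity) (fun k _ ↦ hpos k) ⟨i, mem_univ i⟩ 1
  have hatkinson : ((1 / (n : ℝ)) * ∑ k, x k ^ (1 - ε)) ^ (1 / (1 - ε)) = M (1 - ε) := by
    rw [mul_sum]; rfl
  have hmean : (1 / (n : ℝ)) * ∑ k, x k = M 1 := by
    rw [mul_sum]; exact (weightedPowerMean_one _ _ _).symm
  have hharmonic : ((1 / (n : ℝ)) * ∑ k, x k) * ((1 / (n : ℝ)) * ∑ k, (x k)⁻¹) = M 1 / M (-1) := by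
    rw [hmean, show M (-1) = _ from weightedPowerMean_neg_one _ _ _, div_inv_eq_mul, mul_sum]
  have hε₀ : 1 - ε ≠ 0 := sub_ne_zero.2 hε.symm
  rw [hatkinson, hharmonic, hmean, inv_div]
  constructor <;> intro hε₂ <;> gcongr
  · exact hmono (by norm_num) hε₀ (by linarith)
  · exact hmono hε₀ (by norm_num) (by linarith)

theorem empirical_atkinson_vs_ahi (n : ℕ) (hn : 0 < n) (x : Fin n → ℝ)
    (hpos : ∀ i, 0 < x i) (hnondeg : ∃ i j, x i ≠ x j) (ε : ℝ) (hε : ε ≠ 1) :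
    (ε < 2 →
      1 - ((1 / (n : ℝ)) * ∑ i, x i ^ (1 - ε)) ^ (1 / (1 - ε)) / ((1 / (n : ℝ)) * ∑ i, x i)
        < 1 - (((1 / (n : ℝ)) * ∑ i, x i) * ((1 / (n : ℝ)) * ∑ i, (x i)⁻¹))⁻¹) ∧
    (2 < ε →
      1 - (((1 / (n : ℝ)) * ∑ i, x i) * ((1 / (n : ℝ)) * ∑ i, (x i)⁻¹))⁻¹
        < 1 - ((1 / (n : ℝ)) * ∑ i, x i ^ (1 - ε)) ^ (1 / (1 - ε)) / ((1 / (n : ℝ)) * ∑ i, x i)) :=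
  empirical_atkinson_vs_ahi_general n x hpos hnondeg ε hε
end

section
/- If X₁,...,Xₙ are i.i.d. positive random variables with E[Xᵢ] < ∞ and E[1/Xᵢ] < ∞, then E[Ĵ] = 1 - n² ∫₀^∞∫₀^∞ (E[exp(-sX - t/X)])^n ds dt, where Ĵ = 1 - n²/((ΣXᵢ)(Σ1/Xⱼ)). -/
/-!
For `a, b > 0`, `1 / (a b) = ∫₀^∞ ∫₀^∞ e^{-s a - t b} ds dt`. Taking `a = ∑ Xᵢ`, `b = ∑ 1 / Xⱼ`
and integrating over `ω`, Tonelli's theorem moves the expectation inside the `(s, t)`-integral,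
where `e^{-s a - t b} = ∏ᵢ e^{-s Xᵢ - t / Xᵢ}` factorises by independence into
`(E[e^{-s X - t / X}])ⁿ`. By Cauchy–Schwarz `n² ≤ (∑ Xᵢ)(∑ 1 / Xⱼ)`, so `1 / (a b)` is bounded;
this finiteness is what allows passing between lower and Bochner integrals.
-/

open MeasureTheory ProbabilityTheory Set

lemma Finset.card_sq_le_sum_mul_sum_inv {ι R : Type*} [Field R] [LinearOrder R]
    [IsStrictOrderedRing R] (s : Finset ι) {x : ι → R} (hx : ∀ i ∈ s, 0 < x i) :
    (s.card : R) ^ 2 ≤ (∑ i ∈ s, x i) * ∑ i ∈ s, (x i)⁻¹ := by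
  simpa using Finset.sum_sq_le_sum_mul_sum_of_sq_le_mul s (r := fun _ => (1 : R))
    (fun i hi => (hx i hi).le) (fun i hi => (inv_pos.2 (hx i hi)).le)
    (fun i hi => by simp [mul_inv_cancel₀ (hx i hi).ne'])

lemma lintegral_Ioi_exp_neg_mul {a : ℝ} (ha : 0 < a) :
    ∫⁻ x in Ioi 0, ENNReal.ofReal (Real.exp (-(x * a))) = ENNReal.ofReal a⁻¹ := by
  have hint := integrableOn_exp_mul_Ioi (neg_lt_zero.2 ha) 0
  have h := integral_exp_mul_Ioi (neg_lt_zero.2 ha) 0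
  simp only [mul_zero, Real.exp_zero, neg_div_neg_eq, one_div] at h
  rw [← h, ofReal_integral_eq_lintegral_ofReal hint
    (ae_of_all _ fun x => (Real.exp_pos _).le)]
  simp_rw [neg_mul, mul_comm]

lemma ofReal_inv_mul_eq_lintegral_exp {a b : ℝ} (ha : 0 < a) (hb : 0 < b) :
    ENNReal.ofReal (a * b)⁻¹ =
      ∫⁻ s in Ioi 0, ∫⁻ t in Ioi 0, ENNReal.ofReal (Real.exp (-(s * a) - t * b)) := by
  simp_rw [sub_eq_add_neg, Real.exp_add, ENNReal.ofReal_mul (Real.exp_pos _).le,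
    lintegral_const_mul' _ _ ENNReal.ofReal_ne_top, lintegral_Ioi_exp_neg_mul hb,
    lintegral_mul_const' _ _ ENNReal.ofReal_ne_top, lintegral_Ioi_exp_neg_mul ha,
    ← ENNReal.ofReal_mul (inv_nonneg.2 ha.le), mul_inv]

section

variable {Ω : Type*} [MeasurableSpace Ω] {μ : Measure Ω}

lemma lintegral_ofReal_inv_mul_eq_lintegral_exp [SFinite μ] {A B : Ω → ℝ}
    (hA : Measurable A) (hB : Measurable B) (hA0 : ∀ᵐ ω ∂μ, 0 < A ω) (hB0 : ∀ᵐ ω ∂μ, 0 < B ω) :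
    ∫⁻ ω, ENNReal.ofReal (A ω * B ω)⁻¹ ∂μ =
      ∫⁻ s in Ioi (0 : ℝ), ∫⁻ t in Ioi (0 : ℝ), ∫⁻ ω,
        ENNReal.ofReal (Real.exp (-(s * A ω) - t * B ω)) ∂μ := by
  have hF : Measurable fun p : (Ω × ℝ) × ℝ =>
      ENNReal.ofReal (Real.exp (-(p.1.2 * A p.1.1) - p.2 * B p.1.1)) := by fun_prop
  calc ∫⁻ ω, ENNReal.ofReal (A ω * B ω)⁻¹ ∂μ
      = ∫⁻ ω, (∫⁻ s in Ioi (0 : ℝ), ∫⁻ t in Ioi (0 : ℝ),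
          ENNReal.ofReal (Real.exp (-(s * A ω) - t * B ω))) ∂μ := by
        refine lintegral_congr_ae ?_
        filter_upwards [hA0, hB0] with ω ha hb using ofReal_inv_mul_eq_lintegral_exp ha hb
    _ = ∫⁻ s in Ioi (0 : ℝ), ∫⁻ ω, (∫⁻ t in Ioi (0 : ℝ),
          ENNReal.ofReal (Real.exp (-(s * A ω) - t * B ω))) ∂μ :=
        lintegral_lintegral_swap hF.lintegral_prod_right'.aemeasurable
    _ = _ := lintegral_congr fun s =>
        lintegral_lintegral_swap (by fun_prop)

lemma integral_integral_eq_toReal_lintegral_lintegral {α β : Type*} [MeasurableSpace α]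
    [MeasurableSpace β] {μ : Measure α} {ν : Measure β} [SFinite μ] [SFinite ν]
    {f : α → β → ℝ} (hf : Measurable (Function.uncurry f)) (hf0 : ∀ a b, 0 ≤ f a b)
    (hfin : ∫⁻ a, ∫⁻ b, ENNReal.ofReal (f a b) ∂ν ∂μ ≠ ⊤) :
    ∫ a, ∫ b, f a b ∂ν ∂μ = (∫⁻ a, ∫⁻ b, ENNReal.ofReal (f a b) ∂ν ∂μ).toReal := by
  have hlin : ∫⁻ p, ENNReal.ofReal (Function.uncurry f p) ∂(μ.prod ν) =
      ∫⁻ a, ∫⁻ b, ENNReal.ofReal (f a b) ∂ν ∂μ :=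
    lintegral_prod _ hf.ennreal_ofReal.aemeasurable
  have hint : Integrable (Function.uncurry f) (μ.prod ν) :=
    ⟨hf.aestronglyMeasurable, (hasFiniteIntegral_iff_ofReal
      (ae_of_all _ fun p : α × β => hf0 p.1 p.2)).2 (hlin ▸ hfin.lt_top)⟩
  calc ∫ a, ∫ b, f a b ∂ν ∂μ = ∫ p, Function.uncurry f p ∂(μ.prod ν) :=
        (integral_prod _ hint).symm
    _ = _ := by
      rw [integral_eq_lintegral_of_nonneg_ae (f := Function.uncurry f)
        (ae_of_all _ fun p => hf0 p.1 p.2) hf.aestronglyMeasurable, hlin]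

lemma ProbabilityTheory.iIndepFun.integral_prod_comp_eq_pow {ι β : Type*} [Fintype ι]
    [MeasurableSpace β] {X : ι → Ω → β} {X₀ : Ω → β} (hX : iIndepFun X μ)
    (hid : ∀ i, IdentDistrib (X i) X₀ μ μ) {g : β → ℝ} (hg : Measurable g) :
    ∫ ω, ∏ i, g (X i ω) ∂μ = (∫ ω, g (X₀ ω) ∂μ) ^ Fintype.card ι := by
  rw [hX.integral_fun_prod_comp (fun i => (hid i).aemeasurable_fst)
    (fun _ => hg.aestronglyMeasurable)]
  have h i : ∫ ω, g (X i ω) ∂μ = ∫ ω, g (X₀ ω) ∂μ := ((hid i).comp hg).integral_eq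
  simp only [h, Finset.prod_const, Finset.card_univ]

lemma ProbabilityTheory.iIndepFun.integral_exp_neg_mul_sum_sub_mul_sum_inv {ι : Type*}
    [Fintype ι] {X : ι → Ω → ℝ} {X₀ : Ω → ℝ} (hX : iIndepFun X μ)
    (hid : ∀ i, IdentDistrib (X i) X₀ μ μ) (s t : ℝ) :
    ∫ ω, Real.exp (-(s * ∑ i, X i ω) - t * ∑ i, (X i ω)⁻¹) ∂μ =
      (∫ ω, Real.exp (-(s * X₀ ω) - t / X₀ ω) ∂μ) ^ Fintype.card ι := by
  rw [← hX.integral_prod_comp_eq_pow hid (by fun_prop : Measurable fun x : ℝ =>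
    Real.exp (-(s * x) - t / x))]
  simp only [← Real.exp_sum, Finset.sum_sub_distrib, Finset.sum_neg_distrib, Finset.mul_sum,
    div_eq_mul_inv]

lemma integrable_inv_sum_mul_sum_inv [IsFiniteMeasure μ] {ι : Type*} [Fintype ι] [Nonempty ι]
    {X : ι → Ω → ℝ} (hX : ∀ i, Measurable (X i)) (hpos : ∀ i, ∀ᵐ ω ∂μ, 0 < X i ω) :
    Integrable (fun ω => ((∑ i, X i ω) * ∑ i, (X i ω)⁻¹)⁻¹) μ := by
  refine Integrable.mono' (integrable_const ((Fintype.card ι : ℝ) ^ 2)⁻¹) (by fun_prop) ?_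
  filter_upwards [ae_all_iff.2 hpos] with ω h
  have hS : 0 < ∑ i, X i ω := Finset.sum_pos (fun i _ => h i) Finset.univ_nonempty
  have hT : 0 < ∑ i, (X i ω)⁻¹ :=
    Finset.sum_pos (fun i _ => inv_pos.2 (h i)) Finset.univ_nonempty
  rw [Real.norm_of_nonneg (by positivity)]
  exact inv_anti₀ (by positivity) (Finset.card_sq_le_sum_mul_sum_inv _ fun i _ => h i)

lemma integrable_exp_neg_mul_sub_mul_of_pos [IsFiniteMeasure μ] {A B : Ω → ℝ}
    (hA : Measurable A) (hB : Measurable B) (hA0 : ∀ᵐ ω ∂μ, 0 < A ω)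
    (hB0 : ∀ᵐ ω ∂μ, 0 < B ω) {s t : ℝ} (hs : 0 < s) (ht : 0 < t) :
    Integrable (fun ω => Real.exp (-(s * A ω) - t * B ω)) μ := by
  refine Integrable.mono' (integrable_const 1) (by fun_prop) ?_
  filter_upwards [hA0, hB0] with ω ha hb
  rw [Real.norm_of_nonneg (Real.exp_pos _).le, Real.exp_le_one_iff]
  nlinarith [mul_pos hs ha, mul_pos ht hb]

lemma integral_inv_mul_eq_integral_integral_exp [IsFiniteMeasure μ] {A B : Ω → ℝ}
    (hA : Measurable A) (hB : Measurable B) (hA0 : ∀ᵐ ω ∂μ, 0 < A ω)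
    (hB0 : ∀ᵐ ω ∂μ, 0 < B ω) (hint : Integrable (fun ω => (A ω * B ω)⁻¹) μ) :
    ∫ ω, (A ω * B ω)⁻¹ ∂μ =
      ∫ s in Ioi (0 : ℝ), ∫ t in Ioi (0 : ℝ), ∫ ω, Real.exp (-(s * A ω) - t * B ω) ∂μ := by
  have hlin : ∫⁻ ω, ENNReal.ofReal (A ω * B ω)⁻¹ ∂μ =
      ∫⁻ s in Ioi (0 : ℝ), ∫⁻ t in Ioi (0 : ℝ),
        ENNReal.ofReal (∫ ω, Real.exp (-(s * A ω) - t * B ω) ∂μ) := by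
    rw [lintegral_ofReal_inv_mul_eq_lintegral_exp hA hB hA0 hB0]
    refine setLIntegral_congr_fun measurableSet_Ioi fun s hs => ?_
    refine setLIntegral_congr_fun measurableSet_Ioi fun t ht => ?_
    exact (ofReal_integral_eq_lintegral_ofReal
      (integrable_exp_neg_mul_sub_mul_of_pos hA hB hA0 hB0 hs ht)
      (ae_of_all _ fun _ => (Real.exp_pos _).le)).symm
  have hjoint : Measurable fun q : (ℝ × ℝ) × Ω =>
      Real.exp (-(q.1.1 * A q.2) - q.1.2 * B q.2) := by fun_prop
  rw [integral_eq_lintegral_of_nonneg_ae _ hint.aestronglyMeasurable, hlin,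
    integral_integral_eq_toReal_lintegral_lintegral
      hjoint.stronglyMeasurable.integral_prod_right'.measurable
      (fun _ _ => integral_nonneg fun _ => (Real.exp_pos _).le)
      (hlin ▸ hint.lintegral_lt_top.ne)]
  filter_upwards [hA0, hB0] with ω ha hb
  positivity

end

theorem expectation_Jhat_integral_representation_general {Ω : Type*} [MeasurableSpace Ω]
    (μ : Measure Ω) [IsProbabilityMeasure μ] (n : ℕ) (hn : 0 < n)
    (X : Fin n → Ω → ℝ) (X₀ : Ω → ℝ) (hmeas : ∀ i, Measurable (X i))
    (hpos : ∀ i, ∀ᵐ ω ∂μ, 0 < X i ω)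
    (hindep : iIndepFun X μ)
    (hid : ∀ i, IdentDistrib (X i) X₀ μ μ) :
    ∫ ω, (1 - (n : ℝ) ^ 2 / ((∑ i, X i ω) * ∑ j, (X j ω)⁻¹)) ∂μ
      = 1 - (n : ℝ) ^ 2 *
          ∫ s in Set.Ioi (0 : ℝ), ∫ t in Set.Ioi (0 : ℝ),
            (∫ ω, Real.exp (-(s * X₀ ω) - t / X₀ ω) ∂μ) ^ n := by
  have : Nonempty (Fin n) := ⟨⟨0, hn⟩⟩
  have hpos_all : ∀ᵐ ω ∂μ, ∀ i, 0 < X i ω := ae_all_iff.2 hpos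
  have hS : ∀ᵐ ω ∂μ, 0 < ∑ i, X i ω :=
    hpos_all.mono fun ω h => Finset.sum_pos (fun i _ => h i) Finset.univ_nonempty
  have hT : ∀ᵐ ω ∂μ, 0 < ∑ j, (X j ω)⁻¹ :=
    hpos_all.mono fun ω h => Finset.sum_pos (fun i _ => inv_pos.2 (h i)) Finset.univ_nonempty
  have hint := integrable_inv_sum_mul_sum_inv hmeas hpos
  calc ∫ ω, (1 - (n : ℝ) ^ 2 / ((∑ i, X i ω) * ∑ j, (X j ω)⁻¹)) ∂μ
      = 1 - (n : ℝ) ^ 2 * ∫ ω, ((∑ i, X i ω) * ∑ j, (X j ω)⁻¹)⁻¹ ∂μ := by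
        simp_rw [div_eq_mul_inv]
        rw [integral_sub (integrable_const 1) (hint.const_mul _), integral_const_mul]
        simp
    _ = 1 - (n : ℝ) ^ 2 * ∫ s in Ioi (0 : ℝ), ∫ t in Ioi (0 : ℝ),
          ∫ ω, Real.exp (-(s * ∑ i, X i ω) - t * ∑ j, (X j ω)⁻¹) ∂μ := by
        rw [integral_inv_mul_eq_integral_integral_exp (by fun_prop) (by fun_prop) hS hT hint]
    _ = _ := by
        simp_rw [hindep.integral_exp_neg_mul_sum_sub_mul_sum_inv hid, Fintype.card_fin]

theorem expectation_Jhat_integral_representation {Ω : Type*} [MeasurableSpace Ω]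
    (μ : Measure Ω) [IsProbabilityMeasure μ] (n : ℕ) (hn : 0 < n)
    (X : Fin n → Ω → ℝ) (X₀ : Ω → ℝ) (hmeas : ∀ i, Measurable (X i))
    (hpos : ∀ i, ∀ᵐ ω ∂μ, 0 < X i ω)
    (hindep : iIndepFun X μ)
    (hid : ∀ i, IdentDistrib (X i) X₀ μ μ)
    (hint : Integrable X₀ μ) (hint' : Integrable (fun ω => (X₀ ω)⁻¹) μ) :
    ∫ ω, (1 - (n : ℝ) ^ 2 / ((∑ i, X i ω) * ∑ j, (X j ω)⁻¹)) ∂μ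
      = 1 - (n : ℝ) ^ 2 *
          ∫ s in Set.Ioi (0 : ℝ), ∫ t in Set.Ioi (0 : ℝ),
            (∫ ω, Real.exp (-(s * X₀ ω) - t / X₀ ω) ∂μ) ^ n :=
  expectation_Jhat_integral_representation_general μ n hn X X₀ hmeas hpos hindep hid
end
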